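/- Let a, b ∈ Dⁿ be incomparable in the componentwise order, and define A = #{i : aᵢ=0, bᵢ≠0}, B = #{i : bᵢ=0, aᵢ≠0}, C = #{i : aᵢ=bᵢ=0}, N = #{i : aᵢ≠0, bᵢ≠0, aᵢ≠bᵢ}. Then z(a∧₀b)² + α·z(a∨₀b)² + (1-α)·z(a∨₁b)² − z(a)² − z(b)² = 2(AB + AN + BN + (1+α)CN) + (1+α)N² > 0, where z(c) denotes the number of zero coordinates of c. -/

import Mathlib

open Finset

/-- The three-element domain `D = {-α, 0, 1}`, abstractly. -/
inductive D3 : Type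
  | neg : D3
  | zero : D3
  | one : D3
deriving DecidableEq

instance : Fintype D3 :=
  ⟨{D3.neg, D3.zero, D3.one}, by rintro (_ | _ | _) <;> simp⟩

namespace D3

/-- The embedding of `D3` into `ℝ` sending `neg ↦ -α`, `zero ↦ 0`, `one ↦ 1`. -/
def emb (α : ℝ) : D3 → ℝ
  | neg => -α
  | zero => 0
  | one => 1

/-- The partial order `0 ≺ 1`, `0 ≺ -α`, with `1` and `-α` incomparable. -/
instance : PartialOrder D3 where
  le x y := x = y ∨ x = zero
  le_refl x := Or.inl rfl
  le_trans x y z hxy hyz := by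
    rcases hxy with rfl | rfl
    · exact hyz
    · exact Or.inr rfl
  le_antisymm x y hxy hyx := by
    rcases hxy with rfl | rfl
    · rfl
    · rcases hyx with rfl | rfl <;> rfl

/-- `∧₀` : `1 ∧₀ (-α) = (-α) ∧₀ 1 = 0`, and min w.r.t. `≺` otherwise. -/
def meet0 (x y : D3) : D3 := if x = y then x else zero

/-- `∨₀` : `1 ∨₀ (-α) = (-α) ∨₀ 1 = 0`, and max w.r.t. `≺` otherwise. -/
def join0 (x y : D3) : D3 :=
  if x = y then x else if x = zero then y else if y = zero then x else zero

/-- `∨₁` : `1 ∨₁ (-α) = (-α) ∨₁ 1 = 1`, and max w.r.t. `≺` otherwise. -/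
def join1 (x y : D3) : D3 :=
  if x = y then x else if x = zero then y else if y = zero then x else one

end D3

/-- Componentwise `∧₀` on `Dⁿ`. -/
def vmeet0 {n : ℕ} (a b : Fin n → D3) : Fin n → D3 := fun i => D3.meet0 (a i) (b i)

/-- Componentwise `∨₀` on `Dⁿ`. -/
def vjoin0 {n : ℕ} (a b : Fin n → D3) : Fin n → D3 := fun i => D3.join0 (a i) (b i)

/-- Componentwise `∨₁` on `Dⁿ`. -/
def vjoin1 {n : ℕ} (a b : Fin n → D3) : Fin n → D3 := fun i => D3.join1 (a i) (b i)

/-- `lam` is a probability distribution on `Dⁿ`. -/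
def IsDist (n : ℕ) (lam : (Fin n → D3) → ℝ) : Prop :=
  (∀ a, 0 ≤ lam a ∧ lam a ≤ 1) ∧ ∑ a : Fin n → D3, lam a = 1

/-- `lam` has marginal vector `x`, i.e. `Σ_a lam(a)·a = x` in `ℝⁿ`. -/
def HasMarginal (α : ℝ) (n : ℕ) (lam : (Fin n → D3) → ℝ) (x : Fin n → ℝ) : Prop :=
  ∀ i, ∑ a : Fin n → D3, lam a * D3.emb α (a i) = x i

/-- The support of `lam` forms a chain w.r.t. the componentwise order on `Dⁿ`. -/
def ChainSupp (n : ℕ) (lam : (Fin n → D3) → ℝ) : Prop :=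
  ∀ a b : Fin n → D3, lam a ≠ 0 → lam b ≠ 0 → a ≤ b ∨ b ≤ a

/-- The box `[-α,1]ⁿ`. -/
def Box (α : ℝ) (n : ℕ) : Set (Fin n → ℝ) := {x | ∀ i, x i ∈ Set.Icc (-α) 1}

/-- `f : Dⁿ → ℝ` is α-bisubmodular. -/
def AlphaBisub (α : ℝ) (n : ℕ) (f : (Fin n → D3) → ℝ) : Prop :=
  ∀ a b : Fin n → D3,
    f (vmeet0 a b) + α * f (vjoin0 a b) + (1 - α) * f (vjoin1 a b) ≤ f a + f b

/-- Number of zero coordinates. -/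
def zc {n : ℕ} (c : Fin n → D3) : ℕ := (Finset.univ.filter fun i => c i = D3.zero).card

/-- The convex closure `f⁻(x)`. -/
noncomputable def cClos (α : ℝ) (n : ℕ) (f : (Fin n → D3) → ℝ) (x : Fin n → ℝ) : ℝ :=
  sInf {y | ∃ lam, IsDist n lam ∧ HasMarginal α n lam x ∧ y = ∑ a : Fin n → D3, lam a * f a}
/-- Number of coordinates with `a i = 0`, `b i ≠ 0`. -/
def cntA {n : ℕ} (a b : Fin n → D3) : ℕ :=
  (Finset.univ.filter fun i => a i = D3.zero ∧ b i ≠ D3.zero).card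

/-- Number of coordinates with `b i = 0`, `a i ≠ 0`. -/
def cntB {n : ℕ} (a b : Fin n → D3) : ℕ :=
  (Finset.univ.filter fun i => b i = D3.zero ∧ a i ≠ D3.zero).card

/-- Number of coordinates with `a i = b i = 0`. -/
def cntC {n : ℕ} (a b : Fin n → D3) : ℕ :=
  (Finset.univ.filter fun i => a i = D3.zero ∧ b i = D3.zero).card

/-- Number of coordinates with `a i ≠ 0`, `b i ≠ 0`, `a i ≠ b i`. -/
def cntN {n : ℕ} (a b : Fin n → D3) : ℕ :=
  (Finset.univ.filter fun i => a i ≠ D3.zero ∧ b i ≠ D3.zero ∧ a i ≠ b i).card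

/-!
Every count in the statement is a sum over coordinates, and the coordinate `i` contributes
according to its type `(aᵢ, bᵢ)` only: `z(a ∧₀ b) = A + B + C + N`, `z(a ∨₀ b) = C + N`,
`z(a ∨₁ b) = C`, `z(a) = A + C`, `z(b) = B + C`, which turns the left-hand side into the
right-hand side by ring arithmetic. A coordinate witnessing `¬ a ≤ b` has `aᵢ ≠ 0` and is of
type `B` or `N`, so incomparability gives `A, B > 0` or `N > 0`, and then one of the products
`AB` or `N²` is positive.
-/

namespace D3

lemma le_iff {x y : D3} : x ≤ y ↔ x = y ∨ x = zero := Iff.rfl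

lemma meet0_eq_zero_iff {x y : D3} : meet0 x y = zero ↔ x = zero ∨ y = zero ∨ x ≠ y := by
  revert x y; decide

lemma join0_eq_zero_iff {x y : D3} :
    join0 x y = zero ↔ x = zero ∧ y = zero ∨ x ≠ zero ∧ y ≠ zero ∧ x ≠ y := by
  revert x y; decide

lemma join1_eq_zero_iff {x y : D3} : join1 x y = zero ↔ x = zero ∧ y = zero := by
  revert x y; decide

end D3

lemma card_filter_eq_add_of_iff {ι : Type*} [Fintype ι] [DecidableEq ι] {p q r : ι → Prop}
    [DecidablePred p] [DecidablePred q] [DecidablePred r]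
    (h : ∀ i, p i ↔ q i ∨ r i) (hqr : ∀ i, q i → ¬ r i) :
    #{i | p i} = #{i | q i} + #{i | r i} := by
  rw [filter_congr fun i _ => h i, filter_or,
    card_union_of_disjoint (disjoint_filter.2 fun i _ => hqr i)]

section Counts

variable {n : ℕ} (a b : Fin n → D3)

lemma zc_eq_cntA_add_cntC : zc a = cntA a b + cntC a b :=
  card_filter_eq_add_of_iff (fun _ => by tauto) (fun _ h h' => h.2 h'.2)

lemma zc_eq_cntB_add_cntC : zc b = cntB a b + cntC a b :=
  card_filter_eq_add_of_iff (fun _ => by tauto) (fun _ h h' => h.2 h'.1)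

lemma zc_vmeet0 : zc (vmeet0 a b) = cntA a b + cntB a b + cntC a b + cntN a b := by
  have hcover : zc (vmeet0 a b) = #{i | a i = .zero ∧ b i ≠ .zero ∨ b i = .zero} + cntN a b :=
    card_filter_eq_add_of_iff (fun _ => by rw [vmeet0, D3.meet0_eq_zero_iff]; tauto)
      (fun _ h h' => by tauto)
  have hzero : #{i | a i = .zero ∧ b i ≠ .zero ∨ b i = .zero} = cntA a b + zc b :=
    card_filter_eq_add_of_iff (fun _ => Iff.rfl) (fun _ h => h.2)
  rw [hcover, hzero, zc_eq_cntB_add_cntC a b]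
  ac_rfl

lemma zc_vjoin0 : zc (vjoin0 a b) = cntC a b + cntN a b :=
  card_filter_eq_add_of_iff (fun _ => D3.join0_eq_zero_iff) (fun _ h h' => h'.1 h.1)

lemma zc_vjoin1 : zc (vjoin1 a b) = cntC a b := by
  simp only [zc, cntC, vjoin1, D3.join1_eq_zero_iff]

lemma cntB_swap : cntB b a = cntA a b := rfl

lemma cntN_swap : cntN b a = cntN a b := by
  simp only [cntN, ne_comm (a := b _), and_left_comm]

variable {a b}

lemma cntB_pos_or_cntN_pos_of_not_le (h : ¬ a ≤ b) : 0 < cntB a b ∨ 0 < cntN a b := by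
  obtain ⟨i, hi⟩ := not_forall.1 h
  rw [D3.le_iff, not_or] at hi
  by_cases hb : b i = .zero
  · exact .inl (card_pos.2 ⟨i, by simp [hb, hi.2]⟩)
  · exact .inr (card_pos.2 ⟨i, by simp [hb, hi.1, hi.2]⟩)

lemma cnt_pos_of_not_le_of_not_le (hab : ¬ a ≤ b) (hba : ¬ b ≤ a) :
    0 < cntA a b ∧ 0 < cntB a b ∨ 0 < cntN a b := by
  have hA := cntB_pos_or_cntN_pos_of_not_le hba
  rw [cntB_swap, cntN_swap] at hA
  have hB := cntB_pos_or_cntN_pos_of_not_le hab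
  tauto

end Counts

/-- the counting identity for `z(·)²` and its strict positivity. -/
theorem stmt12 (α : ℝ) (hα : α ∈ Set.Ioc (0 : ℝ) 1) (n : ℕ) (a b : Fin n → D3)
    (hab : ¬ a ≤ b) (hba : ¬ b ≤ a) :
    (zc (vmeet0 a b) : ℝ) ^ 2 + α * (zc (vjoin0 a b) : ℝ) ^ 2
        + (1 - α) * (zc (vjoin1 a b) : ℝ) ^ 2 - (zc a : ℝ) ^ 2 - (zc b : ℝ) ^ 2
      = 2 * ((cntA a b : ℝ) * (cntB a b : ℝ) + (cntA a b : ℝ) * (cntN a b : ℝ)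
          + (cntB a b : ℝ) * (cntN a b : ℝ)
          + (1 + α) * (cntC a b : ℝ) * (cntN a b : ℝ)) + (1 + α) * (cntN a b : ℝ) ^ 2 ∧
    0 < 2 * ((cntA a b : ℝ) * (cntB a b : ℝ) + (cntA a b : ℝ) * (cntN a b : ℝ)
          + (cntB a b : ℝ) * (cntN a b : ℝ)
          + (1 + α) * (cntC a b : ℝ) * (cntN a b : ℝ)) + (1 + α) * (cntN a b : ℝ) ^ 2 := by
  refine ⟨?_, ?_⟩
  · rw [zc_vmeet0, zc_vjoin0, zc_vjoin1, zc_eq_cntA_add_cntC a b, zc_eq_cntB_add_cntC a b]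
    push_cast
    ring
  · have hα₀ : 0 ≤ α := hα.1.le
    rcases cnt_pos_of_not_le_of_not_le hab hba with ⟨hA, hB⟩ | hN
    <;> positivity
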